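/- arXiv:2402.05437 — 7 statements merged into one kernel-verified Lean document; each statement's English description precedes it below -/
import Mathlib

section
/- If t and w are involutions in a finite group G such that 4 divides the order of the subgroup ⟨t, w⟩, then there exists an involution z in G commuting with both t and w. -/
theorem stmt_2 (G : Type*) [Group G] [Finite G] (t w : G)
    (ht : orderOf t = 2) (hw : orderOf w = 2)
    (hdiv : 4 ∣ Nat.card (Subgroup.closure ({t, w} : Set G))) :
    ∃ z : G, orderOf z = 2 ∧ z * t = t * z ∧ z * w = w * z := by
  set x := t * w with hx
  set n := orderOf x with hn
  have ht2 : t * t = 1 := by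
    have := pow_orderOf_eq_one t; rw [ht, pow_two] at this; exact this
  have hw2 : w * w = 1 := by
    have := pow_orderOf_eq_one w; rw [hw, pow_two] at this; exact this
  have htinv : t⁻¹ = t := inv_eq_of_mul_eq_one_left ht2
  have hwinv : w⁻¹ = w := inv_eq_of_mul_eq_one_left hw2
  have hconjt : t * x * t⁻¹ = x⁻¹ := by
    rw [htinv, hx, mul_inv_rev, htinv, hwinv]
    rw [show t * (t * w) * t = (t * t) * (w * t) by group, ht2, one_mul]
  have hconjw : w * x * w⁻¹ = x⁻¹ := by
    rw [hwinv, hx, mul_inv_rev, htinv, hwinv]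
    rw [show w * (t * w) * w = (w * t) * (w * w) by group, hw2, mul_one]
  set H := Subgroup.closure ({t, w} : Set G) with hH
  have htH : t ∈ H := Subgroup.subset_closure (by simp)
  have hwH : w ∈ H := Subgroup.subset_closure (by simp)
  have hxH : x ∈ H := mul_mem htH hwH
  set K := Subgroup.zpowers x with hK
  -- conjugation by t preserves K
  have hconjK : ∀ a ∈ K, t * a * t ∈ K := by
    rintro a ⟨i, rfl⟩
    refine ⟨-i, ?_⟩
    show x ^ (-i) = t * x ^ i * t
    have h1 : t * x ^ i * t = (x⁻¹) ^ i := by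
      rw [← hconjt, conj_zpow, htinv]
    rw [h1, inv_zpow, zpow_neg]
  -- coverage: every element of H is in K or t * K
  have hcov : ∀ g ∈ H, g ∈ K ∨ ∃ a ∈ K, g = t * a := by
    intro g hg
    refine Subgroup.closure_induction ?_ ?_ ?_ ?_ hg
    · rintro y (rfl | rfl)
      · exact Or.inr ⟨1, one_mem K, by rw [mul_one]⟩
      · exact Or.inr ⟨x, Subgroup.mem_zpowers x, by
          rw [hx, ← mul_assoc, ht2, one_mul]⟩
    · exact Or.inl (one_mem K)
    · rintro a b _ _ (haK | ⟨a', ha', rfl⟩) (hbK | ⟨b', hb', rfl⟩)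
      · exact Or.inl (mul_mem haK hbK)
      · refine Or.inr ⟨(t * a * t) * b', mul_mem (hconjK a haK) hb', ?_⟩
        rw [show t * ((t * a * t) * b') = (t * t) * (a * (t * b')) from by group, ht2, one_mul]
      · exact Or.inr ⟨a' * b, mul_mem ha' hbK, by rw [mul_assoc]⟩
      · refine Or.inl ?_
        have h2 : (t * a') * (t * b') = (t * a' * t) * b' := by group
        rw [h2]
        exact mul_mem (hconjK a' ha') hb'
    · rintro a _ (haK | ⟨a', ha', rfl⟩)
      · exact Or.inl (inv_mem haK)
      · refine Or.inr ⟨t * a'⁻¹ * t, hconjK _ (inv_mem ha'), ?_⟩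
        rw [mul_inv_rev, htinv, ← mul_assoc, ← mul_assoc, ht2, one_mul]
  -- set-level coverage
  have hcov' : (H : Set G) ⊆ (K : Set G) ∪ (fun g => t * g) '' (K : Set G) := by
    intro g hg
    rcases hcov g hg with h | ⟨a, ha, rfl⟩
    · exact Or.inl h
    · exact Or.inr ⟨a, ha, rfl⟩
  -- cardinalities
  have hcardK : Nat.card K = n := Nat.card_zpowers x
  have hnpos : 0 < n := orderOf_pos x
  have hdvd : n ∣ Nat.card H := by
    rw [← hcardK]
    exact Subgroup.card_dvd_of_le (Subgroup.zpowers_le.mpr hxH)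
  have hle : Nat.card H ≤ 2 * n := by
    have h1 : (H : Set G).ncard ≤ ((K : Set G) ∪ (fun g => t * g) '' (K : Set G)).ncard :=
      Set.ncard_le_ncard hcov' (Set.toFinite _)
    have h2 : ((K : Set G) ∪ (fun g => t * g) '' (K : Set G)).ncard ≤
        (K : Set G).ncard + ((fun g => t * g) '' (K : Set G)).ncard :=
      Set.ncard_union_le _ _
    have h3 : ((fun g => t * g) '' (K : Set G)).ncard = (K : Set G).ncard :=
      Set.ncard_image_of_injective _ (mul_right_injective t)
    have h4 : (K : Set G).ncard = n := by rw [← hcardK]; rfl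
    have h5 : Nat.card H = (H : Set G).ncard := rfl
    omega
  -- conclude n is even
  have heven : 2 ∣ n := by
    obtain ⟨k, hk⟩ := hdvd
    have hpos : 0 < Nat.card H := Nat.card_pos
    have hk2 : k ≤ 2 := by nlinarith
    have hk1 : 1 ≤ k := by nlinarith
    interval_cases k
    · rw [hk, mul_one] at hdiv; omega
    · rw [hk] at hdiv; omega
  -- construct z = x ^ (n / 2)
  obtain ⟨m, hm⟩ := heven
  have hm1 : 1 ≤ m := by omega
  have hz2 : x ^ m * x ^ m = 1 := by
    rw [← pow_add, show m + m = n by omega]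
    exact pow_orderOf_eq_one x
  have hzinv : (x ^ m)⁻¹ = x ^ m := inv_eq_of_mul_eq_one_left hz2
  have hcomm : ∀ u : G, u * x * u⁻¹ = x⁻¹ → x ^ m * u = u * x ^ m := by
    intro u hu
    have h1 : u * x ^ m * u⁻¹ = (x ^ m)⁻¹ := by
      rw [← inv_pow, ← hu, conj_pow]
    rw [hzinv] at h1
    exact (mul_inv_eq_iff_eq_mul.mp h1).symm
  refine ⟨x ^ m, ?_, hcomm t hconjt, hcomm w hconjw⟩
  have horder : orderOf (x ^ m) = n / Nat.gcd n m := orderOf_pow x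
  have hgcd : Nat.gcd n m = m := Nat.gcd_eq_right ⟨2, by omega⟩
  rw [horder, hgcd, hm]
  exact Nat.mul_div_cancel _ (show 0 < m by omega)
end

section
/- Let G be a finite group acting transitively on a finite set X and let π be the permutation character, π(g) = number of fixed points of g on X. If π = 1 + χ₁ + ⋯ + χ_k is the decomposition with each χ_i a nontrivial irreducible character (repetitions allowed, k ≥ 1), then for every g ∈ G there exists some i with π(g)/π(1) ≤ (1 + |χ_i(g)|)/(1 + χ_i(1)). -/
/-!
Evaluating the decomposition at `1` and at `g` gives `π(1) = 1 + ∑ χᵢ(1)` and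
`π(g) ≤ 1 + ∑ |χᵢ(g)|`. If some `|χᵢ(g)| ≥ χᵢ(1)` the bound is trivial since `π(g) ≤ π(1)`.
Otherwise let `c < 1` be the largest ratio `(1 + |χᵢ(g)|)/(1 + χᵢ(1))`; summing
`1 + |χᵢ(g)| ≤ c (1 + χᵢ(1))` over the `k ≥ 1` constituents and discarding `(1 - c)(k - 1) ≥ 0`
gives `1 + ∑ |χᵢ(g)| ≤ c (1 + ∑ χᵢ(1))`.
-/

open MulAction

section MediantBound

variable {ι : Type*} [Fintype ι] [Nonempty ι]

theorem one_add_sum_le_mul_one_add_sum {a b : ι → ℝ} {c : ℝ}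
    (hc : ∀ i, 1 + a i ≤ c * (1 + b i)) (hc1 : c ≤ 1) :
    1 + ∑ i, a i ≤ c * (1 + ∑ i, b i) := by
  have hsum := Finset.sum_le_sum fun i (_ : i ∈ Finset.univ) => hc i
  simp only [← Finset.mul_sum, Finset.sum_add_distrib, Finset.sum_const, Finset.card_univ,
    nsmul_eq_mul, mul_one] at hsum
  have hcard : (1 : ℝ) ≤ Fintype.card ι := by exact_mod_cast Fintype.card_pos
  nlinarith [mul_nonneg (sub_nonneg.mpr hcard) (sub_nonneg.mpr hc1)]

theorem exists_div_le_one_add_div_one_add {a b : ι → ℝ} (hb : ∀ i, 0 ≤ b i) {x : ℝ}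
    (hxa : x ≤ 1 + ∑ i, a i) (hxb : x ≤ 1 + ∑ i, b i) :
    ∃ i, x / (1 + ∑ i, b i) ≤ (1 + a i) / (1 + b i) := by
  have hbpos : ∀ i, 0 < 1 + b i := fun i => by linarith [hb i]
  have hsumpos : 0 < 1 + ∑ i, b i := by
    linarith [Finset.sum_nonneg fun i (_ : i ∈ Finset.univ) => hb i]
  obtain ⟨i₀, -, hmax⟩ := Finset.exists_max_image Finset.univ
    (fun i => (1 + a i) / (1 + b i)) Finset.univ_nonempty
  set c := (1 + a i₀) / (1 + b i₀)
  refine ⟨i₀, ?_⟩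
  rcases le_or_gt 1 c with hc1 | hc1
  · exact le_trans ((div_le_one hsumpos).mpr hxb) hc1
  · have hc : ∀ i, 1 + a i ≤ c * (1 + b i) := fun i =>
      (div_le_iff₀ (hbpos i)).mp (hmax i (Finset.mem_univ i))
    rw [div_le_iff₀ hsumpos]
    exact hxa.trans (one_add_sum_le_mul_one_add_sum hc hc1.le)

end MediantBound

theorem FDRep.norm_character_one {G : Type*} [Monoid G] (V : FDRep ℂ G) :
    ‖V.character 1‖ = Module.finrank ℂ V := by
  simp [FDRep.char_one]

theorem stmt_4_general (G X : Type) [Group G] [Finite X] [Nonempty X]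
    [MulAction G X]
    (k : ℕ) (hk : 1 ≤ k) (W : Fin k → FDRep ℂ G)
    (hdecomp : ∀ g : G, (Nat.card (fixedBy X g) : ℂ) = 1 + ∑ i, (W i).character g)
    (g : G) :
    ∃ i, (Nat.card (fixedBy X g) : ℝ) / (Nat.card X : ℝ) ≤
      (1 + ‖(W i).character g‖) / (1 + ‖(W i).character 1‖) := by
  have : Nonempty (Fin k) := ⟨⟨0, hk⟩⟩
  have hcard : (Nat.card X : ℝ) = 1 + ∑ i, ‖(W i).character 1‖ := by
    have h := hdecomp 1
    simp only [fixedBy_one_eq_univ, Nat.card_univ, FDRep.char_one] at h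
    simp only [FDRep.norm_character_one]
    exact_mod_cast h
  have hfix_le_norm : (Nat.card (fixedBy X g) : ℝ) ≤ 1 + ∑ i, ‖(W i).character g‖ := by
    calc (Nat.card (fixedBy X g) : ℝ) = ‖(1 + ∑ i, (W i).character g)‖ := by
          rw [← hdecomp g]; simp
      _ ≤ 1 + ∑ i, ‖(W i).character g‖ :=
          (norm_add_le _ _).trans (by rw [norm_one]; gcongr; exact norm_sum_le _ _)
  have hfix_le_card : (Nat.card (fixedBy X g) : ℝ) ≤ Nat.card X := by
    exact_mod_cast Nat.card_le_card_of_injective _ Subtype.coe_injective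
  rw [hcard] at hfix_le_card ⊢
  exact exists_div_le_one_add_div_one_add (fun _ => norm_nonneg _) hfix_le_norm hfix_le_card

theorem stmt_4 (G X : Type) [Group G] [Finite G] [Finite X] [Nonempty X]
    [MulAction G X] [IsPretransitive G X]
    (k : ℕ) (hk : 1 ≤ k) (W : Fin k → FDRep ℂ G)
    (hsimple : ∀ i, CategoryTheory.Simple (W i))
    (hnontriv : ∀ i, (W i).character ≠ fun _ => 1)
    (hdecomp : ∀ g : G, (Nat.card (fixedBy X g) : ℂ) = 1 + ∑ i, (W i).character g)
    (g : G) :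
    ∃ i, (Nat.card (fixedBy X g) : ℝ) / (Nat.card X : ℝ) ≤
      (1 + ‖(W i).character g‖) / (1 + ‖(W i).character 1‖) :=
  stmt_4_general G X k hk W hdecomp g
end

section
/- If the alternating group A_m (m ≥ 5) has at most n conjugacy classes of involutions, then m ≤ 4n + 3. -/
open Equiv Equiv.Perm Finset

/-- The swap of `2i` and `2i+1` in `Fin m` (or `1` if out of range). -/
noncomputable def auxSw (m i : ℕ) : Equiv.Perm (Fin m) :=
  if h : 2 * i + 1 < m then Equiv.swap ⟨2 * i, by omega⟩ ⟨2 * i + 1, h⟩ else 1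

/-- Product of `j` disjoint transpositions. -/
noncomputable def auxSig (m j : ℕ) : Equiv.Perm (Fin m) :=
  ((List.range j).map (auxSw m)).prod

lemma auxSig_succ (m j : ℕ) : auxSig m (j + 1) = auxSig m j * auxSw m j := by
  rw [auxSig, auxSig, List.range_succ, List.map_append, List.prod_append]
  simp

lemma auxSw_support {m i : ℕ} (h : 2 * i + 1 < m) :
    (auxSw m i).support = {⟨2 * i, by omega⟩, ⟨2 * i + 1, h⟩} := by
  rw [auxSw, dif_pos h, Equiv.Perm.support_swap]
  intro hh
  have := congrArg Fin.val hh
  simp at this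

lemma auxSw_sq {m i : ℕ} : auxSw m i ^ 2 = 1 := by
  rw [auxSw]
  split
  · rw [sq, Equiv.swap_mul_self]
  · simp

lemma auxSig_support {m : ℕ} : ∀ j : ℕ, 2 * j ≤ m →
    (auxSig m j).support.card = 2 * j ∧ ∀ x ∈ (auxSig m j).support, (x : ℕ) < 2 * j := by
  intro j
  induction j with
  | zero => intro _; simp [auxSig]
  | succ j ih =>
    intro hj
    obtain ⟨hcard, hbd⟩ := ih (by omega)
    have hlt : 2 * j + 1 < m := by omega
    have hsupp := auxSw_support (m := m) hlt
    have hdisj : Equiv.Perm.Disjoint (auxSig m j) (auxSw m j) := by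
      rw [Equiv.Perm.disjoint_iff_disjoint_support, hsupp, Finset.disjoint_left]
      intro a ha hb
      have := hbd a ha
      simp only [Finset.mem_insert, Finset.mem_singleton] at hb
      rcases hb with rfl | rfl <;> simp at this <;> omega
    have hprod := auxSig_succ m j
    constructor
    · rw [hprod, hdisj.card_support_mul, hcard, hsupp]
      rw [Finset.card_insert_of_notMem (by
        simp only [Finset.mem_singleton]
        intro hh; have := congrArg Fin.val hh; simp at this)]
      simp; omega
    · intro x hx
      rw [hprod, hdisj.support_mul, Finset.mem_union] at hx
      rcases hx with hx | hx
      · have := hbd x hx; omega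
      · rw [hsupp] at hx
        simp only [Finset.mem_insert, Finset.mem_singleton] at hx
        rcases hx with rfl | rfl <;> simp <;> omega

lemma auxSig_sq {m j : ℕ} (hj : 2 * j ≤ m) : auxSig m j ^ 2 = 1 := by
  induction j with
  | zero => simp [auxSig]
  | succ j ih =>
    have hlt : 2 * j + 1 < m := by omega
    have hdisj : Equiv.Perm.Disjoint (auxSig m j) (auxSw m j) := by
      rw [Equiv.Perm.disjoint_iff_disjoint_support, auxSw_support hlt,
        Finset.disjoint_left]
      intro a ha hb
      have := (auxSig_support j (by omega)).2 a ha
      simp only [Finset.mem_insert, Finset.mem_singleton] at hb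
      rcases hb with rfl | rfl <;> simp at this <;> omega
    rw [auxSig_succ, hdisj.commute.mul_pow, ih (by omega), auxSw_sq, one_mul]

lemma auxSig_sign {m j : ℕ} (hj : 2 * (2 * j) ≤ m) :
    Equiv.Perm.sign (auxSig m (2 * j)) = 1 := by
  rw [auxSig, map_list_prod]
  rw [List.prod_eq_pow_card _ (-1 : ℤˣ) (fun x hx => ?_)]
  · simp only [List.length_map, List.length_range]
    exact Even.neg_one_pow (even_two_mul j)
  · simp only [List.map_map, List.mem_map, List.mem_range, Function.comp] at hx
    obtain ⟨i, hi, rfl⟩ := hx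
    have h : 2 * i + 1 < m := by omega
    rw [auxSw, dif_pos h, Equiv.Perm.sign_swap]
    intro hh
    have := congrArg Fin.val hh
    simp at this

set_option maxHeartbeats 1000000 in
theorem stmt_8 (m n : ℕ) (hm : 5 ≤ m) (hn : 0 < n)
    (h : Nat.card {c : ConjClasses (alternatingGroup (Fin m)) //
      ∃ g : alternatingGroup (Fin m), orderOf g = 2 ∧ ConjClasses.mk g = c} ≤ n) :
    m ≤ 4 * n + 3 := by
  by_contra hc
  have hm' : 4 * (n + 1) ≤ m := by omega
  -- for each k ≤ n, `auxSig m (2*(k+1))` is an involution in the alternating group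
  have hbound : ∀ k : ℕ, k ≤ n → 2 * (2 * (k + 1)) ≤ m := by intro k hk; omega
  have hmem : ∀ k : ℕ, k ≤ n → auxSig m (2 * (k + 1)) ∈ alternatingGroup (Fin m) := by
    intro k hk
    rw [Equiv.Perm.mem_alternatingGroup]
    exact auxSig_sign (hbound k hk)
  have hne : ∀ k : ℕ, k ≤ n → auxSig m (2 * (k + 1)) ≠ 1 := by
    intro k hk hone
    have := (auxSig_support (2 * (k + 1)) (hbound k hk)).1
    rw [hone] at this
    simp at this
  have hord : ∀ k : ℕ, (hk : k ≤ n) →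
      orderOf (⟨auxSig m (2 * (k + 1)), hmem k hk⟩ : alternatingGroup (Fin m)) = 2 := by
    intro k hk
    apply orderOf_eq_prime
    · exact Subtype.ext (by
        push_cast
        exact auxSig_sq (hbound k hk))
    · intro hone
      exact hne k hk (by simpa using congrArg Subtype.val hone)
  -- build an injection from `Fin (n+1)` into the set of involution classes
  set T := {c : ConjClasses (alternatingGroup (Fin m)) //
      ∃ g : alternatingGroup (Fin m), orderOf g = 2 ∧ ConjClasses.mk g = c}
  let F : Fin (n + 1) → T := fun k =>
    ⟨ConjClasses.mk ⟨auxSig m (2 * ((k : ℕ) + 1)), hmem k (by omega)⟩,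
      ⟨_, hord k (by omega), rfl⟩⟩
  have hinj : Function.Injective F := by
    intro k k' hkk
    have heq := congrArg Subtype.val hkk
    simp only [F] at heq
    rw [ConjClasses.mk_eq_mk_iff_isConj] at heq
    have hconj := (alternatingGroup (Fin m)).subtype.map_isConj heq
    simp only [Subgroup.coe_subtype] at hconj
    rw [isConj_iff] at hconj
    obtain ⟨c, hc'⟩ := hconj
    have hcards : (auxSig m (2 * ((k : ℕ) + 1))).support.card =
        (auxSig m (2 * ((k' : ℕ) + 1))).support.card := by
      rw [← hc', Equiv.Perm.card_support_conj]
    rw [(auxSig_support _ (hbound k (by omega))).1,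
      (auxSig_support _ (hbound k' (by omega))).1] at hcards
    exact Fin.ext (by omega)
  have hle := Nat.card_le_card_of_injective F hinj
  rw [Nat.card_eq_fintype_card, Fintype.card_fin] at hle
  omega
end

section
/- In PSL_2(q) with q odd, q ≥ 5, every involution commutes with at least (q−1)/2 involutions; consequently if some involution of PSL_2(q) commutes with at most n involutions, then q ≤ 2n + 1. -/
/-!
Lift the involution `t` to `T ∈ SL₂(q)`. Then `T²` is central, hence `±1`, and `T² = 1` would
force `T` to be scalar; so `T² = -1` and `tr T = 0`. Choose `A` with `A² = 1` and `AT = -TA`.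
Every `S = xA + yAT` anticommutes with `T` and satisfies `S² = (x² + y²)·1`, so each point of the
conic `x² + y² = -1` yields an element of `SL₂(q)` whose image in `PSL₂(q)` is an involution
commuting with `t`. This assignment is injective (`x`, `y` are half the traces of `SA`, `SAT`),
and `SL₂(q) → PSL₂(q)` is at most two-to-one. The conic has at least `q - 2` points: multiply the
rational parametrisation of the unit circle by one point `a + bi` of the conic.
-/

open Matrix Subgroup
open scoped MatrixGroups

local notation "PSL(2, " R ")" => SL(2, R) ⧸ center SL(2, R)

section Conic

variable {F : Type*} [Field F]

theorem card_sub_two_le_card_one_add_sq_ne_zero [Fintype F] :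
    Fintype.card F - 2 ≤ Nat.card {u : F | 1 + u ^ 2 ≠ 0} := by
  classical
  have hroots : {u : F | 1 + u ^ 2 = 0}.ncard ≤ 2 :=
    calc {u : F | 1 + u ^ 2 = 0}.ncard
        ≤ (Polynomial.nthRootsFinset 2 (-1 : F) : Set F).ncard :=
          Set.ncard_le_ncard fun u hu => by simpa [eq_neg_iff_add_eq_zero, add_comm] using hu
      _ ≤ 2 := by
          rw [Set.ncard_coe_finset, Polynomial.nthRootsFinset_def]
          exact (Multiset.toFinset_card_le _).trans (Polynomial.card_nthRoots 2 _)
  have hsplit := Set.ncard_add_ncard_compl {u : F | 1 + u ^ 2 = 0}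
  rw [Nat.card_eq_fintype_card] at hsplit
  rw [Nat.card_coe_set_eq, show {u : F | 1 + u ^ 2 ≠ 0} = {u | 1 + u ^ 2 = 0}ᶜ from rfl]
  omega

def circleParam (u : F) : F × F := ((1 - u ^ 2) / (1 + u ^ 2), 2 * u / (1 + u ^ 2))

theorem mapsTo_circleParam :
    Set.MapsTo circleParam {u : F | 1 + u ^ 2 ≠ 0} {p | p.1 ^ 2 + p.2 ^ 2 = 1} := by
  intro u hu
  simp only [Set.mem_ofPred_eq, circleParam] at hu ⊢
  field_simp
  ring

theorem injOn_circleParam (h2 : (2 : F) ≠ 0) :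
    Set.InjOn circleParam {u : F | 1 + u ^ 2 ≠ 0} := by
  intro u hu v hv h
  simp only [Set.mem_ofPred_eq, circleParam, Prod.mk.injEq] at hu hv h
  obtain ⟨hx, hy⟩ := h
  have hden : 1 + u ^ 2 = 1 + v ^ 2 := by
    field_simp at hx
    have h : (2 : F) * (u ^ 2 - v ^ 2) = 0 := by linear_combination -hx
    linear_combination (mul_eq_zero.mp h).resolve_left h2
  rw [← hden] at hy
  field_simp at hy
  exact hy

def gaussianMul (a b : F) (p : F × F) : F × F := (a * p.1 - b * p.2, a * p.2 + b * p.1)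

theorem mapsTo_gaussianMul (a b : F) :
    Set.MapsTo (gaussianMul a b) {p | p.1 ^ 2 + p.2 ^ 2 = 1}
      {p | p.1 ^ 2 + p.2 ^ 2 = a ^ 2 + b ^ 2} := by
  intro p hp
  simp only [Set.mem_ofPred_eq, gaussianMul] at hp ⊢
  linear_combination (a ^ 2 + b ^ 2) * hp

theorem gaussianMul_injective {a b : F} (hab : a ^ 2 + b ^ 2 ≠ 0) :
    Function.Injective (gaussianMul a b) := by
  intro p p' h
  simp only [gaussianMul, Prod.mk.injEq] at h
  obtain ⟨hx, hy⟩ := h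
  refine Prod.ext (mul_left_cancel₀ hab ?_) (mul_left_cancel₀ hab ?_)
  · linear_combination a * hx + b * hy
  · linear_combination a * hy - b * hx

theorem card_sub_two_le_card_sq_add_sq_eq [Fintype F] (h2 : (2 : F) ≠ 0) {a b : F}
    (hab : a ^ 2 + b ^ 2 ≠ 0) :
    Fintype.card F - 2 ≤ Nat.card {p : F × F | p.1 ^ 2 + p.2 ^ 2 = a ^ 2 + b ^ 2} := by
  refine card_sub_two_le_card_one_add_sq_ne_zero.trans ?_
  rw [Nat.card_coe_set_eq, Nat.card_coe_set_eq]
  exact Set.ncard_le_ncard_of_injOn _ ((mapsTo_gaussianMul a b).comp mapsTo_circleParam)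
    ((gaussianMul_injective hab).injOn.comp (injOn_circleParam h2) mapsTo_circleParam)

theorem exists_sq_add_sq_eq_neg_one [Finite F] : ∃ a b : F, a ^ 2 + b ^ 2 = -1 := by
  obtain ⟨p, hp⟩ := CharP.exists F
  have : NeZero p := ⟨CharP.char_ne_zero_of_finite F p⟩
  obtain ⟨a, b, h⟩ := CharP.sq_add_sq F p (-1)
  exact ⟨a, b, by exact_mod_cast h⟩

end Conic

namespace Matrix

theorem mul_self_eq_trace_smul_sub_det_smul {R : Type*} [CommRing R]
    (M : Matrix (Fin 2) (Fin 2) R) : M * M = M.trace • M - M.det • 1 := by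
  ext i j
  fin_cases i <;> fin_cases j <;>
    simp [trace_fin_two, det_fin_two, mul_apply, Fin.sum_univ_two] <;> ring

variable {F : Type*} [Field F]

theorem trace_eq_zero_of_mul_self_eq_neg_one {M : Matrix (Fin 2) (Fin 2) F} (hdet : M.det = 1)
    (hM : M * M = -1) : M.trace = 0 := by
  have h : M.trace • M = 0 := by
    have hch := mul_self_eq_trace_smul_sub_det_smul M
    rw [hM, hdet, one_smul, eq_sub_iff_add_eq, neg_add_cancel] at hch
    exact hch.symm
  refine (smul_eq_zero.mp h).resolve_right fun h0 => ?_
  simp [h0] at hdet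

theorem det_eq_one_of_mul_self_eq_neg_one {M : Matrix (Fin 2) (Fin 2) F} (htr : M.trace = 0)
    (hM : M * M = -1) : M.det = 1 := by
  have h := mul_self_eq_trace_smul_sub_det_smul M
  rw [hM, htr, zero_smul, zero_sub, neg_inj] at h
  simpa using (congrFun (congrFun h 0) 0).symm

theorem trace_eq_zero_of_mul_eq_neg_mul {S T : Matrix (Fin 2) (Fin 2) F} (h2 : (2 : F) ≠ 0)
    (hT : T * T = -1) (hST : S * T = -(T * S)) : S.trace = 0 := by
  have hS : T * S * T = S := by
    rw [Matrix.mul_assoc, hST, Matrix.mul_neg, ← Matrix.mul_assoc, hT, Matrix.neg_mul,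
      Matrix.one_mul, neg_neg]
  have h : S.trace = -S.trace := by
    conv_lhs => rw [← hS]
    rw [trace_mul_cycle, hT, Matrix.neg_mul, Matrix.one_mul, trace_neg]
  exact (mul_eq_zero.mp (show (2 : F) * S.trace = 0 by linear_combination h)).resolve_left h2

theorem exists_mul_self_eq_one_mul_eq_neg_mul {T : Matrix (Fin 2) (Fin 2) F}
    (hT : T.trace = 0) : ∃ A : Matrix (Fin 2) (Fin 2) F, A * A = 1 ∧ A * T = -(T * A) := by
  obtain ⟨a, b, c, rfl⟩ : ∃ a b c, T = !![a, b; c, -a] := by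
    rw [trace_fin_two, add_eq_zero_iff_eq_neg'] at hT
    exact ⟨_, _, _, hT ▸ eta_fin_two T⟩
  by_cases hb : b = 0
  · by_cases hc : c = 0
    · subst hb hc
      refine ⟨!![0, 1; 1, 0], ?_, ?_⟩ <;> simp [one_fin_two]
    · refine ⟨!![1, -2 * a / c; 0, -1], ?_, ?_⟩ <;> ext i j <;> fin_cases i <;> fin_cases j <;>
        simp [mul_apply, field, hb] <;> ring
  · refine ⟨!![1, 0; -2 * a / b, -1], ?_, ?_⟩ <;> ext i j <;> fin_cases i <;> fin_cases j <;>
      simp [mul_apply, field] <;> ring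

section Pencil

variable {A T : Matrix (Fin 2) (Fin 2) F}

def anticommPencil (A T : Matrix (Fin 2) (Fin 2) F) (p : F × F) : Matrix (Fin 2) (Fin 2) F :=
  p.1 • A + p.2 • (A * T)

theorem mul_mul_cancel_left_of_mul_self_eq_one (hA : A * A = 1) : A * (A * T) = T := by
  rw [← Matrix.mul_assoc, hA, Matrix.one_mul]

theorem mul_mul_self_eq_neg_of_anticomm (hA : A * A = 1) (hAT : A * T = -(T * A)) :
    A * T * A = -T := by
  rw [Matrix.mul_assoc, neg_eq_iff_eq_neg.mp hAT.symm, Matrix.mul_neg,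
    mul_mul_cancel_left_of_mul_self_eq_one hA]

theorem mul_self_eq_one_of_anticomm (hA : A * A = 1) (hAT : A * T = -(T * A))
    (hT : T * T = -1) : A * T * (A * T) = 1 := by
  rw [← Matrix.mul_assoc, mul_mul_self_eq_neg_of_anticomm hA hAT, Matrix.neg_mul, hT, neg_neg]

theorem anticommPencil_mul (hAT : A * T = -(T * A)) (hT : T * T = -1) (p : F × F) :
    anticommPencil A T p * T = -(T * anticommPencil A T p) := by
  have hATT : A * T * T = -A := by rw [Matrix.mul_assoc, hT, Matrix.mul_neg, Matrix.mul_one]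
  have hTAT : T * (A * T) = A := by
    rw [← Matrix.mul_assoc, neg_eq_iff_eq_neg.mp hAT.symm, Matrix.neg_mul, hATT, neg_neg]
  simp only [anticommPencil, add_mul, mul_add, smul_mul_assoc, mul_smul_comm, hATT, hTAT]
  rw [hAT]
  module

theorem anticommPencil_mul_self (hA : A * A = 1) (hAT : A * T = -(T * A)) (hT : T * T = -1)
    (p : F × F) : anticommPencil A T p * anticommPencil A T p = (p.1 ^ 2 + p.2 ^ 2) • 1 := by
  simp only [anticommPencil, add_mul, mul_add, smul_mul_smul_comm, hA,
    mul_mul_cancel_left_of_mul_self_eq_one hA, mul_mul_self_eq_neg_of_anticomm hA hAT,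
    mul_self_eq_one_of_anticomm hA hAT hT]
  module

theorem trace_anticommPencil_mul (hA : A * A = 1) (hAT : A * T = -(T * A)) (htr : T.trace = 0)
    (p : F × F) : (anticommPencil A T p * A).trace = 2 * p.1 := by
  simp only [anticommPencil, add_mul, smul_mul_assoc, hA, mul_mul_self_eq_neg_of_anticomm hA hAT,
    trace_add, trace_smul, trace_neg, htr, trace_one, Fintype.card_fin, Nat.cast_ofNat,
    smul_eq_mul, neg_zero, mul_zero, add_zero]
  ring

theorem trace_anticommPencil_mul_mul (hA : A * A = 1) (hAT : A * T = -(T * A))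
    (hT : T * T = -1) (htr : T.trace = 0) (p : F × F) :
    (anticommPencil A T p * (A * T)).trace = 2 * p.2 := by
  simp only [anticommPencil, add_mul, smul_mul_assoc, mul_mul_cancel_left_of_mul_self_eq_one hA,
    mul_self_eq_one_of_anticomm hA hAT hT, trace_add, trace_smul, htr, trace_one,
    Fintype.card_fin, Nat.cast_ofNat, smul_eq_mul, mul_zero, zero_add]
  ring

theorem anticommPencil_injective (h2 : (2 : F) ≠ 0) (hA : A * A = 1) (hAT : A * T = -(T * A))
    (hT : T * T = -1) (htr : T.trace = 0) : Function.Injective (anticommPencil A T) := by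
  intro p p' h
  have hx := trace_anticommPencil_mul hA hAT htr p
  have hy := trace_anticommPencil_mul_mul hA hAT hT htr p
  rw [h, trace_anticommPencil_mul hA hAT htr] at hx
  rw [h, trace_anticommPencil_mul_mul hA hAT hT htr] at hy
  exact Prod.ext (mul_left_cancel₀ h2 hx).symm (mul_left_cancel₀ h2 hy).symm

end Pencil

end Matrix

namespace Matrix.SpecialLinearGroup

section CommRing

variable {R : Type*} [CommRing R]

theorem mk_neg (g : SL(2, R)) : ((-g : SL(2, R)) : PSL(2, R)) = g := by
  have h : (-1 : SL(2, R)) ∈ center SL(2, R) :=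
    Subgroup.mem_center_iff.mpr fun h => by rw [mul_neg_one, neg_one_mul]
  rw [← neg_one_mul, QuotientGroup.mk_mul, (QuotientGroup.eq_one_iff _).mpr h, one_mul]

theorem mk_mul_comm_of_mul_eq_neg_mul {S T : SL(2, R)} (hST : S * T = -(T * S)) :
    (S : PSL(2, R)) * T = T * S := by
  rw [← QuotientGroup.mk_mul, hST, mk_neg, QuotientGroup.mk_mul]

end CommRing

variable {F : Type*} [Field F]

theorem eq_one_or_eq_neg_one_of_mem_center {g : SL(2, F)} (hg : g ∈ center SL(2, F)) :
    g = 1 ∨ g = -1 := by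
  obtain ⟨r, hr, hrg⟩ := mem_center_iff.mp hg
  rw [Fintype.card_fin, sq, mul_self_eq_one_iff] at hr
  rcases hr with rfl | rfl
  · left; ext1; simp [← hrg]
  · right; apply Subtype.ext; rw [coe_neg, coe_one, ← hrg, map_neg, map_one]

theorem card_center_le_two : Nat.card (center SL(2, F)) ≤ 2 := by
  rw [Nat.card_congr (center_equiv_rootsOfUnity (n := Fin 2) (R := F)).toEquiv]
  simpa using card_rootsOfUnity F 2

theorem mem_center_of_mul_self_eq_one (h2 : (2 : F) ≠ 0) {g : SL(2, F)} (hg : g * g = 1) :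
    g ∈ center SL(2, F) := by
  have hch := mul_self_eq_trace_smul_sub_det_smul (g : Matrix (Fin 2) (Fin 2) F)
  rw [← coe_mul, hg, coe_one, det_coe, one_smul, eq_sub_iff_add_eq] at hch
  have htr : (g : Matrix (Fin 2) (Fin 2) F).trace ≠ 0 := by
    rintro h0
    rw [h0, zero_smul] at hch
    exact h2 (by simpa [one_add_one_eq_two] using congrFun (congrFun hch 0) 0)
  refine Subgroup.mem_center_iff.mpr fun h => Subtype.ext ?_
  rw [coe_mul, coe_mul]
  refine smul_right_injective _ htr ?_
  dsimp only
  rw [← mul_smul_comm, ← smul_mul_assoc, ← hch, mul_add, add_mul, mul_one, one_mul]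

theorem self_ne_neg (h2 : (2 : F) ≠ 0) (g : SL(2, F)) : g ≠ -g := by
  intro h
  have hg : (g : Matrix (Fin 2) (Fin 2) F) = 0 := by
    have h' := congrArg ((↑) : SL(2, F) → Matrix (Fin 2) (Fin 2) F) h
    rw [coe_neg, eq_neg_iff_add_eq_zero, ← two_smul F] at h'
    exact (smul_eq_zero.mp h').resolve_left h2
  simpa [hg] using g.det_coe

theorem exists_mk_eq_mul_self_eq_neg_one (h2 : (2 : F) ≠ 0) {t : PSL(2, F)}
    (ht : orderOf t = 2) : ∃ T : SL(2, F), (T : PSL(2, F)) = t ∧ T * T = -1 := by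
  obtain ⟨T, rfl⟩ := QuotientGroup.mk_surjective t
  refine ⟨T, rfl, ?_⟩
  have hT : T * T ∈ center SL(2, F) := by
    rw [← QuotientGroup.eq_one_iff, QuotientGroup.mk_mul, ← sq]
    exact orderOf_dvd_iff_pow_eq_one.mp ht.dvd
  refine (eq_one_or_eq_neg_one_of_mem_center hT).resolve_left fun h1 => ?_
  rw [(QuotientGroup.eq_one_iff _).mpr (mem_center_of_mul_self_eq_one h2 h1), orderOf_one] at ht
  exact absurd ht (by norm_num)

theorem orderOf_mk_eq_two (h2 : (2 : F) ≠ 0) {S T : SL(2, F)} (hS : S * S = -1)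
    (hST : S * T = -(T * S)) : orderOf (S : PSL(2, F)) = 2 := by
  refine orderOf_eq_prime ?_ fun h1 => ?_
  · rw [sq, ← QuotientGroup.mk_mul, hS, mk_neg, QuotientGroup.mk_one]
  · have hc := Subgroup.mem_center_iff.mp ((QuotientGroup.eq_one_iff _).mp h1) T
    exact self_ne_neg h2 (T * S) (hc.trans hST)

theorem exists_injective_mul_self_eq_neg_one_mul_eq_neg_mul (h2 : (2 : F) ≠ 0) {T : SL(2, F)}
    (hT : T * T = -1) :
    ∃ S : {p : F × F | p.1 ^ 2 + p.2 ^ 2 = -1} → SL(2, F),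
      Function.Injective S ∧ ∀ p, S p * S p = -1 ∧ S p * T = -(T * S p) := by
  have hTm : (T : Matrix (Fin 2) (Fin 2) F) * T = -1 := by rw [← coe_mul, hT, coe_neg, coe_one]
  have htr := trace_eq_zero_of_mul_self_eq_neg_one T.det_coe hTm
  obtain ⟨A, hA, hAT⟩ := exists_mul_self_eq_one_mul_eq_neg_mul htr
  have hsq (p : {p : F × F | p.1 ^ 2 + p.2 ^ 2 = -1}) :
      anticommPencil A T p * anticommPencil A T p = -1 := by
    rw [anticommPencil_mul_self hA hAT hTm, p.2, neg_one_smul]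
  have hanti (p : F × F) := anticommPencil_mul hAT hTm p
  refine ⟨fun p => ⟨anticommPencil A T p, det_eq_one_of_mul_self_eq_neg_one
    (trace_eq_zero_of_mul_eq_neg_mul h2 hTm (hanti p)) (hsq p)⟩, fun p p' h => ?_,
    fun p => ⟨Subtype.ext (hsq p), Subtype.ext (hanti p)⟩⟩
  exact Subtype.ext (anticommPencil_injective h2 hA hAT hTm htr (congrArg Subtype.val h))

theorem card_sq_add_sq_eq_neg_one_le_two_mul_card [Finite F] (h2 : (2 : F) ≠ 0)
    {T : SL(2, F)} (hT : T * T = -1) :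
    Nat.card {p : F × F | p.1 ^ 2 + p.2 ^ 2 = -1} ≤
      2 * Nat.card {z : PSL(2, F) | orderOf z = 2 ∧ z * T = T * z} := by
  obtain ⟨S, hS_inj, hS⟩ := exists_injective_mul_self_eq_neg_one_mul_eq_neg_mul h2 hT
  let f (p : {p : F × F | p.1 ^ 2 + p.2 ^ 2 = -1}) :
      QuotientGroup.mk ⁻¹' {z : PSL(2, F) | orderOf z = 2 ∧ z * T = T * z} :=
    ⟨S p, orderOf_mk_eq_two h2 (hS p).1 (hS p).2, mk_mul_comm_of_mul_eq_neg_mul (hS p).2⟩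
  calc Nat.card {p : F × F | p.1 ^ 2 + p.2 ^ 2 = -1}
      ≤ Nat.card (QuotientGroup.mk ⁻¹' {z : PSL(2, F) | orderOf z = 2 ∧ z * T = T * z}) :=
        Nat.card_le_card_of_injective f fun p p' h => hS_inj (congrArg Subtype.val h)
    _ = Nat.card (center SL(2, F)) *
          Nat.card {z : PSL(2, F) | orderOf z = 2 ∧ z * T = T * z} :=
        QuotientGroup.card_preimage_mk _ _
    _ ≤ _ := Nat.mul_le_mul_right _ card_center_le_two

end Matrix.SpecialLinearGroup

theorem stmt_10_general (q : ℕ) (F : Type*) [Field F] [Fintype F]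
    (hF : Fintype.card F = q) (hodd : Odd q) (n : ℕ)
    (t : Matrix.SpecialLinearGroup (Fin 2) F ⧸
      Subgroup.center (Matrix.SpecialLinearGroup (Fin 2) F))
    (ht : orderOf t = 2) :
    (q - 1) / 2 ≤ Nat.card {z : Matrix.SpecialLinearGroup (Fin 2) F ⧸
        Subgroup.center (Matrix.SpecialLinearGroup (Fin 2) F) |
        orderOf z = 2 ∧ z * t = t * z} ∧
      (Nat.card {z : Matrix.SpecialLinearGroup (Fin 2) F ⧸
        Subgroup.center (Matrix.SpecialLinearGroup (Fin 2) F) |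
        orderOf z = 2 ∧ z * t = t * z} ≤ n → q ≤ 2 * n + 1) := by
  have h2 : (2 : F) ≠ 0 := Ring.two_ne_zero fun hchar => Nat.not_even_iff_odd.mpr hodd
    (hF ▸ Nat.even_iff.mpr (FiniteField.even_card_of_char_two hchar))
  obtain ⟨T, rfl, hT⟩ := SpecialLinearGroup.exists_mk_eq_mul_self_eq_neg_one h2 ht
  obtain ⟨a, b, hab⟩ := exists_sq_add_sq_eq_neg_one (F := F)
  have hconic := card_sub_two_le_card_sq_add_sq_eq h2 (hab ▸ neg_ne_zero.mpr one_ne_zero)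
  rw [hab, hF] at hconic
  have hcount := SpecialLinearGroup.card_sq_add_sq_eq_neg_one_le_two_mul_card h2 hT
  obtain ⟨k, rfl⟩ := hodd
  exact ⟨by omega, fun _ => by omega⟩

theorem stmt_10 (q : ℕ) (F : Type*) [Field F] [Fintype F]
    (hF : Fintype.card F = q) (hodd : Odd q) (hq : 5 ≤ q) (n : ℕ) (hn : 0 < n)
    (t : Matrix.SpecialLinearGroup (Fin 2) F ⧸
      Subgroup.center (Matrix.SpecialLinearGroup (Fin 2) F))
    (ht : orderOf t = 2) :
    (q - 1) / 2 ≤ Nat.card {z : Matrix.SpecialLinearGroup (Fin 2) F ⧸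
        Subgroup.center (Matrix.SpecialLinearGroup (Fin 2) F) |
        orderOf z = 2 ∧ z * t = t * z} ∧
      (Nat.card {z : Matrix.SpecialLinearGroup (Fin 2) F ⧸
        Subgroup.center (Matrix.SpecialLinearGroup (Fin 2) F) |
        orderOf z = 2 ∧ z * t = t * z} ≤ n → q ≤ 2 * n + 1) :=
  stmt_10_general q F hF hodd n t ht
end

section
/- Let H be a finite group, N a normal subgroup of odd order, and t ∈ H an involution. If t commutes with at most n involutions of H, then the involution tN of H/N commutes with at most n involutions of H/N. -/
private theorem lift_inv_aux (H : Type*) [Group H] [Finite H] (N : Subgroup H) [N.Normal]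
    (hN : Odd (Nat.card N)) (w : H) (hw : orderOf ((w : H ⧸ N)) = 2) :
    ∃ u : H, orderOf u = 2 ∧ ((u : H ⧸ N)) = (w : H ⧸ N) ∧ ∃ k : ℕ, u = w ^ k := by
  have hw2 : w ^ 2 ∈ N := by
    have : ((w : H ⧸ N)) ^ 2 = 1 := by rw [← hw]; exact pow_orderOf_eq_one _
    rwa [← QuotientGroup.eq_one_iff, QuotientGroup.mk_pow]
  have hmodd : Odd (orderOf (w ^ 2)) := hN.of_dvd_nat (N.orderOf_dvd_natCard hw2)
  set m := orderOf (w ^ 2) with hm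
  have hdvd : orderOf w ∣ 2 * m := by
    apply orderOf_dvd_of_pow_eq_one
    rw [pow_mul]
    exact pow_orderOf_eq_one _
  have h2dvd : 2 ∣ orderOf w := by
    rw [← hw]
    exact orderOf_dvd_of_pow_eq_one (by rw [← QuotientGroup.mk_pow, pow_orderOf_eq_one, QuotientGroup.mk_one])
  obtain ⟨k, hk⟩ := h2dvd
  have hkodd : Odd k := by
    refine hmodd.of_dvd_nat ?_
    have : 2 * k ∣ 2 * m := hk ▸ hdvd
    exact (mul_dvd_mul_iff_left (two_ne_zero)).mp this
  have hk0 : k ≠ 0 := by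
    intro h; rw [h] at hkodd; simp [Nat.odd_iff] at hkodd
  refine ⟨w ^ k, ?_, ?_, k, rfl⟩
  · rw [orderOf_pow, hk, Nat.gcd_eq_right ⟨2, by ring⟩]
    rw [Nat.mul_comm]; exact Nat.mul_div_cancel_left 2 (Nat.pos_of_ne_zero hk0)
  · obtain ⟨j, hj⟩ := hkodd
    rw [QuotientGroup.mk_pow, hj, pow_succ, pow_mul, ← hw, pow_orderOf_eq_one, one_pow, one_mul]

theorem stmt_14 (H : Type*) [Group H] [Finite H] (N : Subgroup H) [N.Normal]
    (hN : Odd (Nat.card N)) (t : H) (ht : orderOf t = 2) (n : ℕ) (hn : 0 < n)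
    (hbound : Nat.card {z : H | orderOf z = 2 ∧ z * t = t * z} ≤ n) :
    orderOf ((t : H ⧸ N)) = 2 ∧
      Nat.card {z : H ⧸ N | orderOf z = 2 ∧ z * (t : H ⧸ N) = (t : H ⧸ N) * z} ≤ n := by
  have ht2 : t * t = 1 := by
    have := pow_orderOf_eq_one t; rwa [ht, sq] at this
  have htinv : t⁻¹ = t := by
    rw [inv_eq_iff_mul_eq_one]; exact ht2
  have htbar : orderOf ((t : H ⧸ N)) = 2 := by
    have h1 : ((t : H ⧸ N)) ^ 2 = 1 := by
      rw [← QuotientGroup.mk_pow, ← ht, pow_orderOf_eq_one, QuotientGroup.mk_one]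
    have hne : ((t : H ⧸ N)) ≠ 1 := by
      intro h
      have htN : t ∈ N := (QuotientGroup.eq_one_iff t).mp h
      have hdv : orderOf t ∣ Nat.card N := N.orderOf_dvd_natCard htN
      rw [ht] at hdv
      rw [Nat.odd_iff] at hN
      omega
    exact orderOf_eq_prime h1 hne
  have htbar2 : ((t : H ⧸ N)) * ((t : H ⧸ N)) = 1 := by
    rw [← QuotientGroup.mk_mul, ht2, QuotientGroup.mk_one]
  refine ⟨htbar, ?_⟩
  have key : ∀ zbar ∈ {z : H ⧸ N | orderOf z = 2 ∧ z * (t : H ⧸ N) = (t : H ⧸ N) * z},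
      ∃ z : H, (orderOf z = 2 ∧ z * t = t * z) ∧ ((z : H ⧸ N)) = zbar := by
    rintro zbar ⟨hz2, hzc⟩
    by_cases hzt : zbar = (t : H ⧸ N)
    · exact ⟨t, ⟨ht, rfl⟩, hzt.symm⟩
    · obtain ⟨z₀, hz₀⟩ := QuotientGroup.mk_surjective zbar
      obtain ⟨z, hz2', hzq, -⟩ := lift_inv_aux H N hN z₀ (by rw [hz₀]; exact hz2)
      rw [hz₀] at hzq
      have hzz : z * z = 1 := by
        have := pow_orderOf_eq_one z; rwa [hz2', sq] at this
      have hzinv : z⁻¹ = z := by rw [inv_eq_iff_mul_eq_one]; exact hzz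
      -- w = t * z
      set w := t * z with hw
      have hwq : ((w : H ⧸ N)) = (t : H ⧸ N) * zbar := by
        rw [hw, QuotientGroup.mk_mul, hzq]
      have hword : orderOf ((w : H ⧸ N)) = 2 := by
        refine orderOf_eq_prime ?_ ?_
        · have hzb2 : zbar * zbar = 1 := by
            have := pow_orderOf_eq_one zbar; rwa [hz2, sq] at this
          rw [hwq, sq, mul_assoc, ← mul_assoc zbar, hzc, mul_assoc, hzb2, mul_one, htbar2]
        · rw [hwq]
          intro h
          apply hzt
          have h1 : zbar * (t : H ⧸ N) = 1 := by rw [hzc]; exact h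
          have h2 : ((t : H ⧸ N))⁻¹ = (t : H ⧸ N) := by
            rw [inv_eq_iff_mul_eq_one]; exact htbar2
          rw [← h2, eq_inv_iff_mul_eq_one]; exact h1
      obtain ⟨u, hu2, huq, k, hk⟩ := lift_inv_aux H N hN w hword
      have huu : u * u = 1 := by
        have := pow_orderOf_eq_one u; rwa [hu2, sq] at this
      have huinv : u⁻¹ = u := by rw [inv_eq_iff_mul_eq_one]; exact huu
      have htwt : t * w * t⁻¹ = w⁻¹ := by
        rw [hw, mul_inv_rev, hzinv, htinv, ← mul_assoc, ht2, one_mul]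
      have hcomm : t * u = u * t := by
        have h1 : t * u * t⁻¹ = u⁻¹ := by
          rw [hk, ← conj_pow, htwt, inv_pow]
        rw [huinv, htinv] at h1
        calc t * u = t * u * t * t := by rw [mul_assoc, ht2, mul_one]
        _ = u * t := by rw [h1]
      refine ⟨t * u, ⟨?_, ?_⟩, ?_⟩
      · refine orderOf_eq_prime ?_ ?_
        · rw [sq, mul_assoc, ← mul_assoc u, ← hcomm, mul_assoc, ← mul_assoc, ht2, one_mul, huu]
        · intro h
          have : ((t * u : H) : H ⧸ N) = 1 := by rw [h, QuotientGroup.mk_one]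
          rw [QuotientGroup.mk_mul, huq, hwq, ← mul_assoc, htbar2, one_mul] at this
          rw [this] at hz2
          simp at hz2
      · rw [mul_assoc, ← hcomm]
      · rw [QuotientGroup.mk_mul, huq, hwq, ← mul_assoc, htbar2, one_mul]
  have hforall : ∀ zbar : {z : H ⧸ N | orderOf z = 2 ∧ z * (t : H ⧸ N) = (t : H ⧸ N) * z},
      ∃ z : {z : H | orderOf z = 2 ∧ z * t = t * z}, (((z : H) : H ⧸ N)) = (zbar : H ⧸ N) := by
    rintro ⟨zbar, hzbar⟩
    obtain ⟨z, hz, hzq⟩ := key zbar hzbar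
    exact ⟨⟨z, hz⟩, hzq⟩
  choose f hf using hforall
  have hinj : Function.Injective f := by
    intro a b hab
    have : (a : H ⧸ N) = (b : H ⧸ N) := by rw [← hf a, ← hf b, hab]
    exact Subtype.ext this
  exact le_trans (Nat.card_le_card_of_injective f hinj) hbound
end

section
/- If t is an involution in a finite group G and t is the only involution of G commuting with t, then the Sylow 2-subgroups of G contain a unique involution. -/
section Aux

variable {G : Type*} [Group G]

/-- If `t` is self-inverse and inverts `x` by conjugation, it inverts every power of `x`. -/
private lemma aux_conj_pow {t x : G} (hti : t⁻¹ = t) (hinv : t * x * t = x⁻¹) (k : ℕ) :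
    t * x ^ k * t = (x ^ k)⁻¹ := by
  have h1 : (MulAut.conj t) x = x⁻¹ := by rw [MulAut.conj_apply, hti]; exact hinv
  have h2 : (MulAut.conj t) (x ^ k) = (x ^ k)⁻¹ := by rw [map_pow, h1, inv_pow]
  rw [MulAut.conj_apply, hti] at h2
  exact h2

private lemma order_two_inv_eq {a : G} (ha : orderOf a = 2) : a⁻¹ = a := by
  have h := pow_orderOf_eq_one a
  rw [ha, pow_two] at h
  rw [inv_eq_iff_mul_eq_one]; exact h

private lemma order_two_mul_self {a : G} (ha : orderOf a = 2) : a * a = 1 := by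
  have h := pow_orderOf_eq_one a
  rwa [ha, pow_two] at h

/-- If `a, b` are involutions and `a*b` has even order, there is an involution commuting
with both of them. -/
private lemma aux_even [Finite G] {a b : G} (ha : orderOf a = 2) (hb : orderOf b = 2)
    (hne : a ≠ b) (heven : 2 ∣ orderOf (a * b)) :
    ∃ c : G, orderOf c = 2 ∧ c * a = a * c ∧ c * b = b * c := by
  have hai : a⁻¹ = a := order_two_inv_eq ha
  have hbi : b⁻¹ = b := order_two_inv_eq hb
  set x := a * b with hx
  have hxinv : x⁻¹ = b * a := by rw [hx, mul_inv_rev, hai, hbi]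
  have hxne : x ≠ 1 := by
    intro h
    apply hne
    have : a = b⁻¹ := eq_inv_of_mul_eq_one_left h
    rw [this, hbi]
  have hn : 0 < orderOf x := orderOf_pos x
  obtain ⟨k, hk⟩ := heven
  have hk0 : 0 < k := by omega
  have hklt : k < orderOf x := by omega
  set c := x ^ k with hc
  have hc1 : c ≠ 1 := by
    intro h
    have := orderOf_dvd_of_pow_eq_one h
    exact absurd (Nat.le_of_dvd hk0 this) (by omega)
  have hc2 : c ^ 2 = 1 := by
    rw [hc, ← pow_mul, Nat.mul_comm, ← hk, pow_orderOf_eq_one]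
  have hcord : orderOf c = 2 := orderOf_eq_prime hc2 hc1
  have hcinv : c⁻¹ = c := order_two_inv_eq hcord
  have hainvx : a * x * a = x⁻¹ := by
    rw [hx, hxinv]
    calc a * (a * b) * a = (a * a) * (b * a) := by group
      _ = b * a := by rw [order_two_mul_self ha, one_mul]
  have hbinvx : b * x * b = x⁻¹ := by
    rw [hx, hxinv]
    calc b * (a * b) * b = (b * a) * (b * b) := by group
      _ = b * a := by rw [order_two_mul_self hb, mul_one]
  have hca : a * c * a = c := by
    rw [hc, aux_conj_pow hai hainvx k, ← hc, hcinv]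
  have hcb : b * c * b = c := by
    rw [hc, aux_conj_pow hbi hbinvx k, ← hc, hcinv]
  refine ⟨c, hcord, ?_, ?_⟩
  · have h1 : a * (a * c * a) = c * a := by
      calc a * (a * c * a) = (a * a) * (c * a) := by group
        _ = c * a := by rw [order_two_mul_self ha, one_mul]
    rw [hca] at h1
    exact h1.symm
  · have h1 : b * (b * c * b) = c * b := by
      calc b * (b * c * b) = (b * b) * (c * b) := by group
        _ = c * b := by rw [order_two_mul_self hb, one_mul]
    rw [hcb] at h1
    exact h1.symm

/-- Key lemma: if the only involution commuting with the involution `t` is `t` itself,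
then the same property holds for every involution of `G`. -/
private lemma keyA [Finite G] (t : G) (ht : orderOf t = 2)
    (huniq : ∀ z : G, orderOf z = 2 → z * t = t * z → z = t) :
    ∀ u : G, orderOf u = 2 → ∀ w : G, orderOf w = 2 → w * u = u * w → w = u := by
  have hti : t⁻¹ = t := order_two_inv_eq ht
  -- Step 1: every involution is conjugate to t
  have hconj : ∀ u : G, orderOf u = 2 → ∃ g : G, g * t * g⁻¹ = u := by
    intro u hu
    by_cases hut : u = t
    · exact ⟨1, by simp [hut]⟩
    have hui : u⁻¹ = u := order_two_inv_eq hu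
    set x := t * u with hx
    set n := orderOf x with hnn
    have hn : 0 < n := orderOf_pos x
    rcases Nat.even_or_odd n with hpar | hpar
    · -- even case: impossible, it would force u = t
      exfalso
      obtain ⟨c, hcord, hca, hcb⟩ := aux_even ht hu (Ne.symm hut) (even_iff_two_dvd.mp hpar)
      have hct : c = t := huniq c hcord hca
      rw [hct] at hcb
      exact hut (huniq u hu hcb.symm)
    · -- odd case: u = x^m * t * (x^m)⁻¹ with 2m = n - 1
      obtain ⟨m, hm⟩ : ∃ m, n = 2 * m + 1 := hpar
      have htinvx : t * x * t = x⁻¹ := by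
        rw [hx, mul_inv_rev, hui, hti]
        calc t * (t * u) * t = (t * t) * (u * t) := by group
          _ = u * t := by rw [order_two_mul_self ht, one_mul]
      have hpow : t * x ^ m * t = (x ^ m)⁻¹ := aux_conj_pow hti htinvx m
      refine ⟨x ^ m, ?_⟩
      have h2m : x ^ m * x ^ m = x⁻¹ := by
        rw [← pow_add]
        have : x ^ (m + m) * x = 1 := by
          rw [← pow_succ]
          have : m + m + 1 = n := by omega
          rw [this]
          exact pow_orderOf_eq_one x
        rw [eq_inv_iff_mul_eq_one]
        exact this
      have hxm_t : x ^ m * t = t * (x ^ m)⁻¹ := by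
        calc x ^ m * t = t * (t * x ^ m * t) := by
              rw [← mul_assoc, ← mul_assoc, order_two_mul_self ht, one_mul]
          _ = t * (x ^ m)⁻¹ := by rw [hpow]
      calc x ^ m * t * (x ^ m)⁻¹ = t * (x ^ m)⁻¹ * (x ^ m)⁻¹ := by rw [hxm_t]
        _ = t * (x ^ m * x ^ m)⁻¹ := by rw [mul_inv_rev]; group
        _ = t * x := by rw [h2m, inv_inv]
        _ = u := by rw [hx, ← mul_assoc, order_two_mul_self ht, one_mul]
  -- Step 2: transfer the uniqueness property along conjugation
  intro u hu w hw hcomm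
  obtain ⟨g, hg⟩ := hconj u hu
  set w' := g⁻¹ * w * g with hw'
  have hw'ord : orderOf w' = 2 := by
    have hsq : w' ^ 2 = 1 := by
      have hwsq : w * w = 1 := order_two_mul_self hw
      calc w' ^ 2 = (g⁻¹ * w * g) * (g⁻¹ * w * g) := by rw [hw', pow_two]
        _ = g⁻¹ * (w * w) * g := by group
        _ = 1 := by rw [hwsq]; group
    have hne1 : w' ≠ 1 := by
      intro h
      have : w = 1 := by
        have := congrArg (fun y => g * y * g⁻¹) h
        simpa [hw', mul_assoc] using this
      rw [this, orderOf_one] at hw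
      exact (by norm_num : (1 : ℕ) ≠ 2) hw
    exact orderOf_eq_prime hsq hne1
  have hw't : w' * t = t * w' := by
    have h1 : w * u = u * w := hcomm
    rw [← hg] at h1
    have : g⁻¹ * (w * (g * t * g⁻¹)) * g = g⁻¹ * ((g * t * g⁻¹) * w) * g := by rw [h1]
    calc w' * t = g⁻¹ * (w * (g * t * g⁻¹)) * g := by rw [hw']; group
      _ = g⁻¹ * ((g * t * g⁻¹) * w) * g := this
      _ = t * w' := by rw [hw']; group
  have : w' = t := huniq w' hw'ord hw't
  have : w = g * t * g⁻¹ := by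
    rw [← this, hw']; group
  rw [this, hg]

end Aux

theorem stmt_18 (G : Type*) [Group G] [Finite G] (t : G) (ht : orderOf t = 2)
    (huniq : ∀ z : G, orderOf z = 2 → z * t = t * z → z = t)
    (P : Sylow 2 G) :
    ∃! z : G, z ∈ (P : Subgroup G) ∧ orderOf z = 2 := by
  have hA := keyA t ht huniq
  -- existence of an involution in P
  have hdvdG : (2 : ℕ) ∣ Nat.card G := by
    rw [← ht]; exact orderOf_dvd_natCard t
  have hcardP : Nat.card (P : Subgroup G) = 2 ^ (Nat.card G).factorization 2 :=
    P.card_eq_multiplicity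
  have hfac : 0 < (Nat.card G).factorization 2 :=
    Nat.Prime.factorization_pos_of_dvd Nat.prime_two (Nat.card_pos.ne') hdvdG
  have hdvdP : (2 : ℕ) ∣ Nat.card (P : Subgroup G) := by
    rw [hcardP]
    exact dvd_pow_self 2 hfac.ne'
  obtain ⟨z, hz⟩ := exists_prime_orderOf_dvd_card' (G := (P : Subgroup G)) 2 hdvdP
  have hzord : orderOf (z : G) = 2 := by rw [Subgroup.orderOf_coe]; exact hz
  -- uniqueness: any two involutions in P coincide
  have huniqP : ∀ w : G, w ∈ (P : Subgroup G) → orderOf w = 2 → w = (z : G) := by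
    intro w hwP hword
    by_cases hwz : w = (z : G)
    · exact hwz
    -- w * z has 2-power order, nontrivial, hence even order
    have hxP : (z : G) * w ∈ (P : Subgroup G) := mul_mem z.2 hwP
    obtain ⟨k, hk⟩ := P.isPGroup' ⟨_, hxP⟩
    have hk' : ((z : G) * w) ^ 2 ^ k = 1 := by
      have := congrArg (Subgroup.subtype (P : Subgroup G)) hk
      simpa using this
    have hord_dvd : orderOf ((z : G) * w) ∣ 2 ^ k := orderOf_dvd_of_pow_eq_one hk'
    obtain ⟨j, _, hj⟩ := (Nat.dvd_prime_pow Nat.prime_two).mp hord_dvd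
    have hxne : (z : G) * w ≠ 1 := by
      intro h
      apply hwz
      have : w = (z : G)⁻¹ := eq_inv_of_mul_eq_one_right h
      rw [this, order_two_inv_eq hzord]
    have hj0 : 0 < j := by
      rcases Nat.eq_zero_or_pos j with h0 | h0
      · exfalso
        apply hxne
        have : orderOf ((z : G) * w) = 1 := by rw [hj, h0, pow_zero]
        exact orderOf_eq_one_iff.mp this
      · exact h0
    have heven : (2 : ℕ) ∣ orderOf ((z : G) * w) := by
      rw [hj]; exact dvd_pow_self 2 hj0.ne'
    obtain ⟨c, hcord, hca, hcb⟩ := aux_even hzord hword (fun h => hwz h.symm) heven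
    have hcz : c = (z : G) := hA (z : G) hzord c hcord hca
    rw [hcz] at hcb
    exact hA (z : G) hzord w hword hcb.symm
  exact ⟨(z : G), ⟨z.2, hzord⟩, fun y hy => huniqP y hy.1 hy.2⟩
end

section
/- Let G be an infinite simple locally finite group and T a finite subgroup of G. Then there exist a finite subgroup H ≤ G and a normal subgroup N ⊴ H such that H/N is simple, T ≤ H, and T ∩ N = 1, and moreover |H/N| ≥ |T|. -/
/-!
Kegel's argument. In a simple group every element lies in the normal closure of any `t ≠ 1`,
and only finitely many conjugators are needed to witness this; so local finiteness yields finite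
subgroups `F ≤ E ≤ D`, with `F = ⟨T, g⟩` for some `g ≠ 1`, such that every subgroup normalised by
`E` that meets `F` nontrivially contains `F`, and likewise for `E` inside `D`.

Take `N ⊴ D` maximal with `N ∩ E = 1` and `W ⊴ D` minimal above `N`. Then `W ∩ E ≠ 1`, so
`E ≤ W`. Conjugation by `D` permutes the maximal normal subgroups of `W` containing `N`, so their
intersection is normal in `D`; by minimality of `W` it lies in `N` and in particular does not
contain `F`. A maximal normal subgroup `P` of `W` missing `F` meets `F` trivially by the choice
of `E`, and `W / P` is the required simple section: `T` embeds into it.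
-/

open Subgroup

theorem Maximal.apply_orderIso {α : Type*} [Preorder α] {p : α → Prop} (σ : α ≃o α)
    (hp : ∀ x, p (σ x) ↔ p x) {x : α} (hx : Maximal p x) : Maximal p (σ x) := by
  refine ⟨(hp x).2 hx.1, fun y hy hxy => ?_⟩
  rw [← σ.apply_symm_apply y, σ.le_iff_le] at hxy ⊢
  exact hx.2 ((hp _).1 (by rwa [σ.apply_symm_apply])) hxy

theorem QuotientGroup.isSimpleGroup_of_maximal {W : Type*} [Group W] {K : Subgroup W} [K.Normal]
    (hK : Maximal (fun Q : Subgroup W => Q.Normal ∧ Q ≠ ⊤) K) : IsSimpleGroup (W ⧸ K) := by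
  have hsurj := QuotientGroup.mk'_surjective K
  have : Nontrivial (W ⧸ K) := by
    by_contra h
    exact hK.1.2 <| QuotientGroup.subgroup_eq_top_of_subsingleton K
      (not_nontrivial_iff_subsingleton.1 h)
  refine ⟨fun Q hQ => ?_⟩
  by_cases htop : Q.comap (QuotientGroup.mk' K) = ⊤
  · right
    exact comap_injective hsurj (by rw [htop, comap_top])
  · left
    apply comap_injective hsurj
    rw [MonoidHom.comap_bot, QuotientGroup.ker_mk']
    exact (hK.2 ⟨hQ.comap _, htop⟩ (QuotientGroup.le_comap_mk' K Q)).antisymm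
      (QuotientGroup.le_comap_mk' K Q)

namespace Subgroup

theorem card_le_card_quotient_of_inf_eq_bot {H : Type*} [Group H] {K L : Subgroup H}
    (hLK : L ⊓ K = ⊥) [Finite (H ⧸ K)] : Nat.card L ≤ Nat.card (H ⧸ K) := by
  refine Nat.card_le_card_of_injective (fun l : L => (l : H ⧸ K)) fun a b hab => ?_
  have hmem : (a : H)⁻¹ * b ∈ L ⊓ K :=
    mem_inf.2 ⟨L.mul_mem (L.inv_mem a.2) b.2, QuotientGroup.eq.1 hab⟩
  rw [hLK, mem_bot] at hmem
  exact Subtype.ext (inv_mul_eq_one.1 hmem)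

variable {G : Type*} [Group G]

theorem maximal_normal_subgroupOf {P W : Subgroup G}
    (hP : Maximal (fun Q => Q < W ∧ W ≤ normalizer Q) P) :
    Maximal (fun Q : Subgroup W => Q.Normal ∧ Q ≠ ⊤) (P.subgroupOf W) := by
  refine ⟨⟨(normal_subgroupOf_iff_le_normalizer hP.1.1.le).2 hP.1.2, fun h => hP.1.1.not_ge ?_⟩,
    fun Q hQ hPQ => ?_⟩
  · rw [← map_subgroupOf_eq_of_le hP.1.1.le, h, ← MonoidHom.range_eq_map, range_subtype]
  have hQW : Q.map W.subtype ≤ W := map_subtype_le Q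
  have hback : (Q.map W.subtype).subgroupOf W = Q :=
    comap_map_eq_self_of_injective W.subtype_injective Q
  have hPQ' : P ≤ Q.map W.subtype := by
    rw [← map_subgroupOf_eq_of_le hP.1.1.le]
    exact map_mono hPQ
  have hQP := hP.2 ⟨hQW.lt_of_ne fun h => hQ.2 (by rw [← hback, h, subgroupOf_self]),
    (normal_subgroupOf_iff_le_normalizer hQW).1 (by rw [hback]; exact hQ.1)⟩ hPQ'
  rw [← hback]
  exact comap_mono hQP

theorem finite_closure_of_finite (hLF : ∀ S : Finset G, Finite (closure (S : Set G)))
    {S : Set G} (hS : S.Finite) : (closure S : Set G).Finite :=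
  Set.finite_coe_iff.1 (by simpa using hLF hS.toFinset)

theorem finite_setOf_le {D : Subgroup G} (hD : (D : Set G).Finite) :
    {Q : Subgroup G | Q ≤ D}.Finite :=
  hD.finite_subsets.preimage SetLike.coe_injective.injOn

-- Equivalently: `F` lies in the `E`-normal closure of each of its nontrivial elements.
def IsEnvelope (E F : Subgroup G) : Prop :=
  ∀ K : Subgroup G, E ≤ normalizer K → K ⊓ F ≠ ⊥ → F ≤ K

theorem normalClosure_singleton_eq_top [IsSimpleGroup G] {t : G} (ht : t ≠ 1) :
    normalClosure {t} = ⊤ :=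
  normalClosure_normal.eq_bot_or_eq_top.resolve_left fun h =>
    ht (by simpa [h] using subset_normalClosure (Set.mem_singleton t))

theorem exists_finite_conjugators_of_mem_normalClosure {t f : G}
    (hf : f ∈ normalClosure {t}) :
    ∃ C : Set G, C.Finite ∧ ∀ K : Subgroup G, (∀ c ∈ C, c ∈ normalizer K) → t ∈ K → f ∈ K := by
  induction hf using closure_induction with
  | mem x hx =>
    rw [Group.mem_conjugatesOfSet_iff] at hx
    obtain ⟨_, rfl, hconj⟩ := hx
    obtain ⟨c, rfl⟩ := isConj_iff.1 hconj
    exact ⟨{c}, Set.finite_singleton c, fun K hK ht => (mem_normalizer_iff.1 (hK c rfl) _).1 ht⟩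
  | one => exact ⟨∅, Set.finite_empty, fun K _ _ => K.one_mem⟩
  | mul x y _ _ hx hy =>
    obtain ⟨C, hC, hxK⟩ := hx
    obtain ⟨C', hC', hyK⟩ := hy
    exact ⟨C ∪ C', hC.union hC', fun K hK ht => K.mul_mem
      (hxK K (fun c hc => hK c (Or.inl hc)) ht) (hyK K (fun c hc => hK c (Or.inr hc)) ht)⟩
  | inv x _ hx =>
    obtain ⟨C, hC, hxK⟩ := hx
    exact ⟨C, hC, fun K hK ht => K.inv_mem (hxK K hK ht)⟩

theorem exists_finite_isEnvelope [IsSimpleGroup G]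
    (hLF : ∀ S : Finset G, Finite (closure (S : Set G))) {F : Subgroup G}
    (hF : (F : Set G).Finite) : ∃ E : Subgroup G, (E : Set G).Finite ∧ F ≤ E ∧ IsEnvelope E F := by
  choose! C hCfin hC using fun (t : G) (ht : t ≠ 1) (f : G) =>
    exists_finite_conjugators_of_mem_normalClosure
      (normalClosure_singleton_eq_top ht ▸ mem_top f)
  set U : Set G := F ∪ ⋃ t ∈ (F : Set G) \ {1}, ⋃ f ∈ (F : Set G), C t f
  have hU : U.Finite := hF.union <| hF.sdiff.biUnion fun t ht =>
    hF.biUnion fun f _ => hCfin t ht.2 f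
  refine ⟨closure U, finite_closure_of_finite hLF hU, fun x hx => subset_closure (Or.inl hx), ?_⟩
  intro K hK hKF f hf
  obtain ⟨⟨t, htK, htF⟩, ht⟩ := ne_bot_iff_exists_ne_one.1 hKF
  have ht1 : t ≠ 1 := fun h => ht (Subtype.ext h)
  refine hC t ht1 f K (fun c hc => hK (subset_closure (Or.inr ?_))) htK
  exact Set.mem_biUnion ⟨htF, ht1⟩ (Set.mem_biUnion hf hc)

theorem maximal_map_conj {N W : Subgroup G} {d : G} (hdN : d ∈ normalizer N)
    (hdW : d ∈ normalizer W) {P : Subgroup G}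
    (hP : Maximal (fun Q => N ≤ Q ∧ Q < W ∧ W ≤ normalizer Q) P) :
    Maximal (fun Q => N ≤ Q ∧ Q < W ∧ W ≤ normalizer Q) (P.map (MulAut.conj d).toMonoidHom) := by
  set σ := MulEquiv.mapSubgroup (MulAut.conj d)
  have hσN : σ N = N := mem_normalizer_iff_map_conj_eq.1 hdN
  have hσW : σ W = W := mem_normalizer_iff_map_conj_eq.1 hdW
  refine hP.apply_orderIso σ fun Q => ?_
  have hnorm : normalizer (σ Q) = σ (normalizer Q) := (map_equiv_normalizer_eq Q _).symm
  conv_lhs => rw [← hσN, ← hσW, hnorm]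
  simp only [σ.le_iff_le, σ.lt_iff_lt]

theorem exists_maximal_normal_not_le {D N W F : Subgroup G} (hD : (D : Set G).Finite)
    (hDN : D ≤ normalizer N) (hW : Minimal (fun X => N < X ∧ X ≤ D ∧ D ≤ normalizer X) W)
    (hFN : ¬ F ≤ N) :
    ∃ P, Maximal (fun Q => N ≤ Q ∧ Q < W ∧ W ≤ normalizer Q) P ∧ ¬ F ≤ P := by
  set p : Subgroup G → Prop := fun Q => N ≤ Q ∧ Q < W ∧ W ≤ normalizer Q
  have hfin : {Q | p Q}.Finite :=
    (finite_setOf_le hD).subset fun Q hQ => hQ.2.1.le.trans hW.1.2.1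
  obtain ⟨P₀, -, hP₀⟩ := hfin.exists_le_maximal (a := N) ⟨le_rfl, hW.1.1, hW.1.2.1.trans hDN⟩
  by_contra! hall
  set R := ⨅ (P) (_ : Maximal p P), P
  have hRW : R < W := (iInf₂_le P₀ hP₀).trans_lt hP₀.1.2.1
  have hFR : F ≤ R := le_iInf₂ hall
  have hNR : N < R := lt_of_le_of_ne (le_iInf₂ fun P hP => hP.1.1) fun h => hFN (h ▸ hFR)
  have hDR : D ≤ normalizer R := by
    refine le_normalizer_iff.2 fun d hd k hk => mem_iInf.2 fun P => mem_iInf.2 fun hP => ?_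
    have hd' : d⁻¹ ∈ D := inv_mem hd
    have := mem_iInf.1 (mem_iInf.1 hk _) (maximal_map_conj (hDN hd') (hW.1.2.2 hd') hP)
    rw [mem_map_equiv] at this
    simpa using this
  exact hRW.ne (hW.eq_of_le ⟨hNR, hRW.le.trans hW.1.2.1, hDR⟩ hRW.le)

theorem exists_maximal_normal_inf_eq_bot {D E F : Subgroup G} (hD : (D : Set G).Finite)
    (hED : E ≤ D) (hFE : F ≤ E) (hF : F ≠ ⊥) (hDE : IsEnvelope D E) (hEF : IsEnvelope E F) :
    ∃ W P : Subgroup G, W ≤ D ∧ F ≤ W ∧ Maximal (fun Q => Q < W ∧ W ≤ normalizer Q) P ∧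
      F ⊓ P = ⊥ := by
  have hfin {p : Subgroup G → Prop} (hp : ∀ Q, p Q → Q ≤ D) : {Q | p Q}.Finite :=
    (finite_setOf_le hD).subset hp
  obtain ⟨N, hN⟩ := (hfin (p := fun X => X ≤ D ∧ D ≤ normalizer X ∧ X ⊓ E = ⊥) fun _ h => h.1)
    |>.exists_maximal ⟨⊥, bot_le, le_normalizer_of_normal, bot_inf_eq E⟩
  have hFN : ¬ F ≤ N := fun h =>
    hF (eq_bot_iff.2 fun x hx => hN.1.2.2 ▸ mem_inf.2 ⟨h hx, hFE hx⟩)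
  obtain ⟨W, hW⟩ := (hfin (p := fun X => N < X ∧ X ≤ D ∧ D ≤ normalizer X) fun _ h => h.2.1)
    |>.exists_minimal ⟨D, hN.1.1.lt_of_ne fun h => hFN (h ▸ hFE.trans hED), le_rfl,
      le_normalizer⟩
  have hEW : E ≤ W := hDE W hW.1.2.2 fun h =>
    hW.1.1.not_ge (hN.2 ⟨hW.1.2.1, hW.1.2.2, h⟩ hW.1.1.le)
  obtain ⟨P, hP, hFP⟩ := exists_maximal_normal_not_le hD hN.1.2.1 hW hFN
  refine ⟨W, P, hW.1.2.1, hFE.trans hEW,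
    ⟨hP.1.2, fun Q hQ hPQ => hP.2 ⟨hP.1.1.trans hPQ, hQ⟩ hPQ⟩, ?_⟩
  by_contra h
  exact hFP (hEF P (hEW.trans hP.1.2.2) (by rwa [inf_comm]))

end Subgroup

theorem stmt_19_general (G : Type*) [Group G] [IsSimpleGroup G]
    (hLF : ∀ S : Finset G, Finite (Subgroup.closure (S : Set G)))
    (T : Subgroup G) (hT : Finite T) :
    ∃ (H : Subgroup G) (N : Subgroup H) (hN : N.Normal), Finite H ∧
      (letI := hN; IsSimpleGroup (H ⧸ N)) ∧ T ≤ H ∧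
      T.subgroupOf H ⊓ N = ⊥ ∧ Nat.card T ≤ Nat.card (H ⧸ N) := by
  obtain ⟨g, hg⟩ := exists_ne (1 : G)
  set F := closure (insert g (T : Set G))
  have hTF : T ≤ F := fun x hx => subset_closure (Set.mem_insert_of_mem g hx)
  have hF₁ : F ≠ ⊥ := fun h => hg (mem_bot.1 (h ▸ subset_closure (Set.mem_insert g _)))
  obtain ⟨E, hE, hFE, hEF⟩ :=
    exists_finite_isEnvelope hLF (finite_closure_of_finite hLF ((T : Set G).toFinite.insert g))
  obtain ⟨D, hD, hED, hDE⟩ := exists_finite_isEnvelope hLF hE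
  obtain ⟨W, P, hWD, hFW, hP, hFP⟩ := exists_maximal_normal_inf_eq_bot hD hED hFE hF₁ hDE hEF
  have hPW := maximal_normal_subgroupOf hP
  have := hPW.1.1
  have : Finite W := (hD.subset hWD).to_subtype
  have hTP : T.subgroupOf W ⊓ P.subgroupOf W = ⊥ := by
    rw [eq_bot_iff]
    rintro x ⟨hxT, hxP⟩
    have : (x : G) ∈ F ⊓ P := ⟨hTF hxT, hxP⟩
    rw [hFP, mem_bot] at this
    exact mem_bot.2 (Subtype.ext this)
  refine ⟨W, P.subgroupOf W, hPW.1.1, inferInstance, QuotientGroup.isSimpleGroup_of_maximal hPW,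
    hTF.trans hFW, hTP, ?_⟩
  rw [← Nat.card_congr (subgroupOfEquivOfLe (hTF.trans hFW)).toEquiv]
  exact card_le_card_quotient_of_inf_eq_bot hTP

theorem stmt_19 (G : Type*) [Group G] [IsSimpleGroup G] [Infinite G]
    (hLF : ∀ S : Finset G, Finite (Subgroup.closure (S : Set G)))
    (T : Subgroup G) (hT : Finite T) :
    ∃ (H : Subgroup G) (N : Subgroup H) (hN : N.Normal), Finite H ∧
      (letI := hN; IsSimpleGroup (H ⧸ N)) ∧ T ≤ H ∧
      T.subgroupOf H ⊓ N = ⊥ ∧ Nat.card T ≤ Nat.card (H ⧸ N) :=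
  stmt_19_general G hLF T hT
end
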